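/- For all integers $m, n$ and positive integers $c$, the Kloosterman-type sum $K(m,n;c) := \sum_{d \bmod c,\ \gcd(d,c)=1} e^{\pi i s(d,c)} e\left(\frac{\bar{d}m + dn}{c}\right)$ is real, i.e., $\overline{K(m,n;c)} = K(m,n;c)$. Here $\bar{d}$ denotes the multiplicative inverse of $d$ modulo $c$, $e(\alpha) = e^{2\pi i \alpha}$, and $s(d,c)$ is the Dedekind sum. -/

import Mathlib

open Complex

/-- `e(α) = e^{2πiα}`. -/
noncomputable def eFn (α : ℂ) : ℂ := Complex.exp (2 * Real.pi * Complex.I * α)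

/-- The Dedekind sum `s(d, c)`. -/
noncomputable def dedekindSum (d c : ℤ) : ℝ :=
  ∑ r ∈ Finset.Ico 1 c.toNat,
    ((r : ℝ) / c - 1 / 2) *
      ((d * r : ℝ) / c - Int.floor ((d * r : ℝ) / c) - 1 / 2)

/-- The Kloosterman-type sum `K(m, n; c)` with the eta-multiplier twist
`e^{πi s(d,c)}`, summed over residues `d (mod c)` coprime to `c`, where
`d̄ = ((d : ZMod c)⁻¹).val` is the multiplicative inverse of `d` modulo `c`. -/
noncomputable def etaKloosterman (m n : ℤ) (c : ℕ) : ℂ :=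
  ∑ d ∈ (Finset.range c).filter (fun d => Nat.Coprime d c),
    Complex.exp (Real.pi * Complex.I * dedekindSum (d : ℤ) c) *
      eFn (((((d : ZMod c)⁻¹).val : ℤ) * m + (d : ℤ) * n : ℂ) / c)

/-! Negation `d ↦ -d` permutes the residues coprime to `c`, and it conjugates each summand:
`s(-d, c) = -s(d, c)` because `c ∤ d r` for `0 < r < c`, so `{-d r / c} = 1 - {d r / c}`; and
`(-d)⁻¹ = -d̄` modulo `c`, so the exponential factor is conjugated as well. -/

open ComplexConjugate

lemma dedekindSum_eq_sum_fract (d c : ℤ) :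
    dedekindSum d c =
      ∑ r ∈ Finset.Ico 1 c.toNat, ((r : ℝ) / c - 1 / 2) * (Int.fract ((d * r : ℝ) / c) - 1 / 2) := by
  simp only [dedekindSum, Int.fract]

lemma dedekindSum_congr {d d' c : ℤ} (h : d ≡ d' [ZMOD c]) : dedekindSum d c = dedekindSum d' c := by
  obtain ⟨k, hk⟩ := h.dvd
  rw [dedekindSum_eq_sum_fract, dedekindSum_eq_sum_fract]
  refine Finset.sum_congr rfl fun r hr => ?_
  have hc : (c : ℝ) ≠ 0 := by
    have : 0 < c := by simp only [Finset.mem_Ico] at hr; omega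
    exact_mod_cast this.ne'
  have hd' : (d' * r : ℝ) / c = (d * r : ℝ) / c + ((k * r : ℤ) : ℝ) := by
    rw [eq_add_of_sub_eq' hk]; push_cast; field_simp
  rw [hd', Int.fract_add_intCast]

lemma dedekindSum_neg {d c : ℤ} (h : IsCoprime d c) : dedekindSum (-d) c = -dedekindSum d c := by
  rw [dedekindSum_eq_sum_fract, dedekindSum_eq_sum_fract, ← Finset.sum_neg_distrib]
  refine Finset.sum_congr rfl fun r hr => ?_
  simp only [Finset.mem_Ico] at hr
  have hfract : Int.fract ((d * r : ℝ) / c) ≠ 0 := by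
    rintro hzero
    obtain ⟨z, hz⟩ := Int.fract_eq_zero_iff.1 hzero
    have hdvd : c ∣ d * r := ⟨z, by
      rw [eq_div_iff (by norm_cast; omega)] at hz; exact_mod_cast hz.symm.trans (mul_comm _ _)⟩
    have := Int.le_of_dvd (by omega) (h.symm.dvd_of_dvd_mul_left hdvd)
    omega
  rw [Int.cast_neg, neg_mul, neg_div, Int.fract_neg hfract]
  ring

lemma ZMod.inv_neg_of_isUnit {n : ℕ} {a : ZMod n} (ha : IsUnit a) : (-a)⁻¹ = -a⁻¹ :=
  ZMod.inv_eq_of_mul_eq_one n _ _ (by rw [neg_mul_neg, ZMod.mul_inv_of_unit a ha])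

lemma conj_eFn (x : ℂ) : conj (eFn x) = eFn (-conj x) := by
  simp only [eFn, ← Complex.exp_conj, map_mul, map_ofNat, Complex.conj_ofReal, Complex.conj_I]
  ring_nf

lemma eFn_add_intCast (x : ℂ) (k : ℤ) : eFn (x + k) = eFn x := by
  rw [eFn, mul_add, Complex.exp_add, mul_comm _ (k : ℂ), Complex.exp_int_mul_two_pi_mul_I, mul_one,
    eFn]

noncomputable def etaKloostermanTerm (m n : ℤ) (c d : ℕ) : ℂ :=
  Complex.exp (Real.pi * Complex.I * dedekindSum (d : ℤ) c) *
    eFn (((((d : ZMod c)⁻¹).val : ℤ) * m + (d : ℤ) * n : ℂ) / c)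

lemma conj_etaKloostermanTerm {m n : ℤ} {c d d' : ℕ} [NeZero c] (hd : d.Coprime c)
    (hd' : (d' : ZMod c) = -d) :
    conj (etaKloostermanTerm m n c d) = etaKloostermanTerm m n c d' := by
  have hs : dedekindSum d' c = -dedekindSum d c := by
    rw [dedekindSum_congr ((ZMod.intCast_eq_intCast_iff _ (-d) c).1 (by push_cast; exact hd')),
      dedekindSum_neg (Nat.isCoprime_iff_coprime.2 hd)]
  obtain ⟨t, ht⟩ : (c : ℤ) ∣ (((d' : ZMod c)⁻¹.val : ℤ) * m + d' * n) -
      -(((d : ZMod c)⁻¹.val : ℤ) * m + d * n) := by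
    refine ((ZMod.intCast_eq_intCast_iff _ _ c).1 ?_).dvd
    push_cast [ZMod.natCast_zmod_val, hd',
      ZMod.inv_neg_of_isUnit ((ZMod.isUnit_iff_coprime d c).2 hd)]
    ring
  have harg : ((((d' : ZMod c)⁻¹).val : ℤ) * m + (d' : ℤ) * n : ℂ) / c =
      -conj (((((d : ZMod c)⁻¹).val : ℤ) * m + (d : ℤ) * n : ℂ) / c) + (t : ℤ) := by
    have hc : (c : ℂ) ≠ 0 := NeZero.ne _
    have htC : ((((d' : ZMod c)⁻¹.val : ℤ) * m + d' * n -
        -(((d : ZMod c)⁻¹.val : ℤ) * m + d * n) : ℤ) : ℂ) = (c * t : ℤ) := congrArg _ ht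
    push_cast at htC
    simp only [map_div₀, map_add, map_mul, map_intCast, map_natCast]
    field_simp
    linear_combination htC
  rw [etaKloostermanTerm, etaKloostermanTerm, map_mul, ← Complex.exp_conj, conj_eFn, harg,
    eFn_add_intCast, hs]
  simp only [map_mul, Complex.conj_ofReal, Complex.conj_I, Complex.ofReal_neg]
  ring_nf

/-- The Kloosterman-type sum `K(m,n;c)` is real: it equals its own
complex conjugate. -/
theorem etaKloosterman_real (m n : ℤ) (c : ℕ) (hc : 0 < c) :
    (starRingEnd ℂ) (etaKloosterman m n c) = etaKloosterman m n c := by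
  have : NeZero c := ⟨hc.ne'⟩
  set σ : ℕ → ℕ := fun d => (-(d : ZMod c)).val
  have hσ (d : ℕ) : (σ d : ZMod c) = -d := ZMod.natCast_zmod_val _
  have hσ_mem (d : ℕ) (hd : d ∈ (Finset.range c).filter (·.Coprime c)) :
      σ d ∈ (Finset.range c).filter (·.Coprime c) := by
    rw [Finset.mem_filter, Finset.mem_range, ← ZMod.isUnit_iff_coprime, hσ]
    exact ⟨ZMod.val_lt _, ((ZMod.isUnit_iff_coprime d c).2 (Finset.mem_filter.1 hd).2).neg⟩
  have hσσ (d : ℕ) (hd : d ∈ (Finset.range c).filter (·.Coprime c)) : σ (σ d) = d := by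
    simp only [σ, hσ, neg_neg]
    exact ZMod.val_cast_of_lt (Finset.mem_range.1 (Finset.mem_filter.1 hd).1)
  rw [etaKloosterman, map_sum]
  exact Finset.sum_nbij' σ σ hσ_mem hσ_mem hσσ hσσ fun d hd =>
    conj_etaKloostermanTerm (Finset.mem_filter.1 hd).2 (hσ d)
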